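/- Let R be a TRS and Π a set of forbidden patterns all of whose flags are h or b. If a term s is minimally non-Π-terminating in a context C[□]_q, then there exist a context C', a rule l → r ∈ R, a substitution σ and a position p such that C[s]_q reduces by →_{R,Π} to C'[lσ]_q using only steps at positions not above-or-equal q, then C'[lσ]_q →_{R,Π} C'[rσ]_q by a step at position q, and the term t = rσ has a subterm t|_p that is minimally non-Π-terminating in the context C'[t[□]_p]_q. -/
import Mathlib


set_option autoImplicit false

namespace FP

/-- First-order terms over a signature `F` with arities `ar`; variables are naturals. -/
inductive Tm (F : Type) (ar : F → ℕ) : Type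
  | var : ℕ → Tm F ar
  | app : (f : F) → (Fin (ar f) → Tm F ar) → Tm F ar

variable {F : Type} {ar : F → ℕ}

/-- The subterm of `t` at position `p` (if `p` is a position of `t`). -/
def subtermAt : Tm F ar → List ℕ → Option (Tm F ar)
  | t, [] => some t
  | .var _, _ :: _ => none
  | .app f ts, i :: p => if h : i < ar f then subtermAt (ts ⟨i, h⟩) p else none

/-- Replacement `t[s]_p` (if `p` is a position of `t`). -/
def replaceAt : Tm F ar → List ℕ → Tm F ar → Option (Tm F ar)
  | _, [], s => some s
  | .var _, _ :: _, _ => none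
  | .app f ts, i :: p, s =>
      if h : i < ar f then
        (replaceAt (ts ⟨i, h⟩) p s).map fun u => Tm.app f (Function.update ts ⟨i, h⟩ u)
      else none

/-- Filling a context `(c, p)` (a term `c` together with a hole position `p`) with `s`,
i.e. `c[s]_p`. -/
def fill (c : Tm F ar) (p : List ℕ) (s : Tm F ar) : Tm F ar :=
  (replaceAt c p s).getD s

/-- `p ∈ Pos t`. -/
def IsPos (t : Tm F ar) (p : List ℕ) : Prop := (subtermAt t p).isSome

/-- Application of a substitution. -/
def subst (σ : ℕ → Tm F ar) : Tm F ar → Tm F ar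
  | .var x => σ x
  | .app f ts => Tm.app f fun i => subst σ (ts i)

/-- The set of variables of a term. -/
def vars : Tm F ar → Set ℕ
  | .var x => {x}
  | .app _ ts => ⋃ i, vars (ts i)

/-- A rewrite rule `lhs → rhs`. -/
structure Rule (F : Type) (ar : F → ℕ) where
  lhs : Tm F ar
  rhs : Tm F ar

/-- `R` is a TRS: left-hand sides are no variables und `Var(r) ⊆ Var(l)`. -/
def IsTRS (R : Set (Rule F ar)) : Prop :=
  ∀ r ∈ R, (∀ x, r.lhs ≠ Tm.var x) ∧ vars r.rhs ⊆ vars r.lhs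

/-- `s →_R t` contracting the redex at position `p`. -/
def RewriteAt (R : Set (Rule F ar)) (p : List ℕ) (s t : Tm F ar) : Prop :=
  ∃ r ∈ R, ∃ σ : ℕ → Tm F ar,
    subtermAt s p = some (subst σ r.lhs) ∧ replaceAt s p (subst σ r.rhs) = some t

/-- `p < q` : strict prefix of positions. -/
def StrictPrefix (p q : List ℕ) : Prop := p <+: q ∧ p ≠ q

/-- `p ∥ q` : parallel (incomparable) positions. -/
def Par (p q : List ℕ) : Prop := ¬ p <+: q ∧ ¬ q <+: p

/-- Flags of forbidden patterns: here / below / above. -/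
inductive Flag : Type
  | h | b | a
deriving DecidableEq

/-- A forbidden pattern `⟨t, p, λ⟩`. -/
structure Pattern (F : Type) (ar : F → ℕ) where
  pat : Tm F ar
  pos : List ℕ
  flag : Flag

/-- `q ∈ P_{t,p}(s)` : `q = o.p` for a match `s|_o = tσ`. -/
def PTP (t : Tm F ar) (p : List ℕ) (s : Tm F ar) (q : List ℕ) : Prop :=
  ∃ (o : List ℕ) (σ : ℕ → Tm F ar), subtermAt s o = some (subst σ t) ∧ q = o ++ p

/-- `o ∈ P_π(s)`. -/
def PPat (π : Pattern F ar) (s : Tm F ar) (o : List ℕ) : Prop :=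
  match π.flag with
  | Flag.a => ∃ q, PTP π.pat π.pos s q ∧ StrictPrefix o q
  | Flag.b => ∃ q, PTP π.pat π.pos s q ∧ StrictPrefix q o
  | Flag.h => PTP π.pat π.pos s o

/-- Position `o` is forbidden in `s` w.r.t. the pattern set `Pi`. -/
def Forbidden (Pi : Set (Pattern F ar)) (s : Tm F ar) (o : List ℕ) : Prop :=
  ∃ π ∈ Pi, PPat π s o

/-- A forbidden-pattern rewrite step at position `p` : an `R`-step at an allowed position. -/
def FPStepAt (R : Set (Rule F ar)) (Pi : Set (Pattern F ar)) (p : List ℕ)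
    (s t : Tm F ar) : Prop :=
  RewriteAt R p s t ∧ ¬ Forbidden Pi s p

/-- `s →_{R,Π} t`. -/
def FPStep (R : Set (Rule F ar)) (Pi : Set (Pattern F ar)) (s t : Tm F ar) : Prop :=
  ∃ p, FPStepAt R Pi p s t

/-- `R` is `Π`-terminating: there is no infinite `→_{R,Π}`-sequence. -/
def PiTerminating (R : Set (Rule F ar)) (Pi : Set (Pattern F ar)) : Prop :=
  ¬ ∃ f : ℕ → Tm F ar, ∀ n, FPStep R Pi (f n) (f (n + 1))

/-- The subterm of `w` at `p` is `Π`-terminating in its context: there is no infinite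
`→_{R,Π}`-sequence from `w` with all steps at, below or parallel to `p` and
infinitely many steps at or below `p`. -/
def TermAtPos (R : Set (Rule F ar)) (Pi : Set (Pattern F ar)) (w : Tm F ar)
    (p : List ℕ) : Prop :=
  ¬ ∃ (f : ℕ → Tm F ar) (q : ℕ → List ℕ),
      f 0 = w ∧ (∀ n, FPStepAt R Pi (q n) (f n) (f (n + 1))) ∧
      (∀ n, ¬ StrictPrefix (q n) p) ∧ (∀ m, ∃ n, m ≤ n ∧ p <+: q n)

/-- `s` is `Π`-terminating in the context `C[□]_p`. -/
def TermInCtx (R : Set (Rule F ar)) (Pi : Set (Pattern F ar)) (C : Tm F ar)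
    (p : List ℕ) (s : Tm F ar) : Prop :=
  TermAtPos R Pi (fill C p s) p

/-- `s` is minimally non-`Π`-terminating in the context `C[□]_q` : `s` is
non-`Π`-terminating in `C[□]_q` and every proper subterm `s|_p` is `Π`-terminating
in the context `C[s[□]_p]_q`. -/
def MinNonTerm (R : Set (Rule F ar)) (Pi : Set (Pattern F ar)) (C : Tm F ar)
    (q : List ℕ) (s : Tm F ar) : Prop :=
  ¬ TermInCtx R Pi C q s ∧
  ∀ p u, p ≠ [] → subtermAt s p = some u → TermAtPos R Pi (fill C q s) (q ++ p)

/-- Linearity of a term. -/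
def Linear (t : Tm F ar) : Prop :=
  ∀ x p q, subtermAt t p = some (Tm.var x) → subtermAt t q = some (Tm.var x) → p = q

/-- The rule `r` overlaps the term `t` at (non-variable) position `p` :
`r.lhs` and `t|_p` unify (for variable-disjoint terms: they have a common instance). -/
def OverlapsAt (r : Rule F ar) (t : Tm F ar) (p : List ℕ) : Prop :=
  ∃ u, subtermAt t p = some u ∧ (∃ f ts, u = Tm.app f ts) ∧
    ∃ σ τ : ℕ → Tm F ar, subst σ r.lhs = subst τ u

/-- Stability of a forbidden pattern w.r.t. `R`. -/
def StablePat (R : Set (Rule F ar)) (π : Pattern F ar) : Prop :=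
  Linear π.pat ∧
  ((π.flag = Flag.b ∧ ∀ r ∈ R, ∀ p, Par p π.pos → ¬ OverlapsAt r π.pat p) ∨
   (π.flag = Flag.h ∧
      ∀ r ∈ R, ∀ p, (Par p π.pos ∨ StrictPrefix π.pos p) → ¬ OverlapsAt r π.pat p))

/-- `Stb(Π)` : the stable patterns of `Π`. -/
def Stb (R : Set (Rule F ar)) (Pi : Set (Pattern F ar)) : Set (Pattern F ar) :=
  {π ∈ Pi | StablePat R π}

/-- `Π_orth` : the patterns of `Π` with flag `h` or `b`, linear, and not overlapped by
any rule of `R` at any position parallel to or below the pattern position. -/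
def PiOrth (R : Set (Rule F ar)) (Pi : Set (Pattern F ar)) : Set (Pattern F ar) :=
  {π ∈ Pi | (π.flag = Flag.h ∨ π.flag = Flag.b) ∧ Linear π.pat ∧
    ∀ r ∈ R, ∀ p, (Par p π.pos ∨ StrictPrefix π.pos p) → ¬ OverlapsAt r π.pat p}

/-! ### The extended signature with marked symbols and the token symbol `T` -/

/-- The extension of the signature `F` by a marked copy `f#` of each symbol and a
fresh token symbol `T`. -/
inductive ESym (F : Type) : Type
  | base : F → ESym F
  | mark : F → ESym F
  | token : ESym F

/-- Arities on the extended signature (the token symbol is unary). -/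
def ear (ar : F → ℕ) : ESym F → ℕ
  | .base f => ar f
  | .mark f => ar f
  | .token => 1

/-- Terms over the extended signature. -/
abbrev ETm (F : Type) (ar : F → ℕ) : Type := Tm (ESym F) (ear ar)

/-- Embedding of terms into the extended signature. -/
def embed : Tm F ar → ETm F ar
  | .var x => .var x
  | .app f ts => .app (ESym.base f) fun i => embed (ts i)

/-- `erase` : unmark all marked symbols and replace `T(s')` by `s'`. -/
def eraseT : ETm F ar → Tm F ar
  | .var x => .var x
  | .app (ESym.base f) ts => .app f fun i => eraseT (ts i)
  | .app (ESym.mark f) ts => .app f fun i => eraseT (ts i)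
  | .app ESym.token ts => eraseT (ts ⟨0, Nat.one_pos⟩)

/-- Mark the root symbol of a term (`l#`). -/
def markRoot : Tm F ar → ETm F ar
  | .var x => .var x
  | .app f ts => .app (ESym.mark f) fun i => embed (ts i)

/-- `T(u)`. -/
def tok (u : ETm F ar) : ETm F ar := Tm.app ESym.token fun _ => u

def embedRule (r : Rule F ar) : Rule (ESym F) (ear ar) := ⟨embed r.lhs, embed r.rhs⟩

def embedTRS (R : Set (Rule F ar)) : Set (Rule (ESym F) (ear ar)) := embedRule '' R

/-- A contextual rule `lhs → rhs [c]`, the context given as a term `ctx` over the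
extended signature together with its hole position `cpos`. -/
structure CRule (F : Type) (ar : F → ℕ) where
  lhs : ETm F ar
  rhs : ETm F ar
  ctx : ETm F ar
  cpos : List ℕ

/-- `f` is a defined symbol of `R`. -/
def Defined (R : Set (Rule F ar)) (f : F) : Prop :=
  ∃ r ∈ R, ∃ ts, r.lhs = Tm.app f ts

/-- `f` occurs in the right-hand side of some rule of `R`. -/
def OccursInRhs (R : Set (Rule F ar)) (f : F) : Prop :=
  ∃ r ∈ R, ∃ p ts, subtermAt r.rhs p = some (Tm.app f ts)

/-- `DP_c(R)` : the contextual dependency pairs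
`l# → (r|_p)# [r[□]_p]` for `p` a position of `r` with defined root that is not
forbidden w.r.t. `Stb(Π)`. -/
def DPc (R : Set (Rule F ar)) (Pi : Set (Pattern F ar)) : Set (CRule F ar) :=
  { c | ∃ r ∈ R, ∃ p u, subtermAt r.rhs p = some u ∧
      (∃ f ts, u = Tm.app f ts ∧ Defined R f) ∧
      ¬ Forbidden (Stb R Pi) r.rhs p ∧
      c = ⟨markRoot r.lhs, markRoot u, embed r.rhs, p⟩ }

/-- `V_c(R)` : the variable-descent pairs `l# → T(x) [r[□]_p]` for `r|_p = x ∈ Var`. -/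
def Vc (R : Set (Rule F ar)) : Set (CRule F ar) :=
  { c | ∃ r ∈ R, ∃ p x, subtermAt r.rhs p = some (Tm.var x) ∧
      c = ⟨markRoot r.lhs, tok (Tm.var x), embed r.rhs, p⟩ }

/-- `A_c(R)` : the activation pairs `T(f(x₁,…,x_k)) → f#(x₁,…,x_k) [□]` for
defined `f` occurring in some right-hand side. -/
def Ac (R : Set (Rule F ar)) : Set (CRule F ar) :=
  { c | ∃ f, Defined R f ∧ OccursInRhs R f ∧
      c = ⟨tok (Tm.app (ESym.base f) fun j => Tm.var j.val),
           Tm.app (ESym.mark f) fun j => Tm.var j.val,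
           Tm.var 0, []⟩ }

/-- `S_c(R)` : the shift pairs `T(f(x₁,…,x_k)) → T(x_i) [f(x₁,…,□,…,x_k)]` for
`f` occurring in some right-hand side. -/
def Sc (R : Set (Rule F ar)) : Set (CRule F ar) :=
  { c | ∃ f, OccursInRhs R f ∧ ∃ i : Fin (ar f),
      c = ⟨tok (Tm.app (ESym.base f) fun j => Tm.var j.val),
           tok (Tm.var i.val),
           Tm.app (ESym.base f) fun j => Tm.var j.val,
           [i.val]⟩ }

/-- `CDP(R)` : all (extended) contextual dependency pairs of `R` w.r.t. `Π`. -/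
def CDP (R : Set (Rule F ar)) (Pi : Set (Pattern F ar)) : Set (CRule F ar) :=
  DPc R Pi ∪ Vc R ∪ Ac R ∪ Sc R

/-- No occurrence of the token symbol `T`. -/
def TokenFree (u : ETm F ar) : Prop :=
  ∀ (p : List ℕ) (ts : Fin (ear ar ESym.token) → ETm F ar),
    subtermAt u p ≠ some (Tm.app ESym.token ts)

/-- The token symbol occurs at most at the root. -/
def TokenOnlyRoot (u : ETm F ar) : Prop :=
  TokenFree u ∨ ∃ w, u = tok w ∧ TokenFree w

/-- `(P, R, Π, T)` is an FP-CDP problem: the token symbol occurs only at the root of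
left- and right-hand sides of `P` (and not in contexts). -/
def IsCDPProblem (P : Set (CRule F ar)) : Prop :=
  ∀ c ∈ P, TokenOnlyRoot c.lhs ∧ TokenOnlyRoot c.rhs ∧ TokenFree c.ctx

/-- `p_i'` : the accumulated hole positions `p_1.p_2.⋯.p_i` of a sequence of CDPs. -/
def chainPos (α : ℕ → CRule F ar) : ℕ → List ℕ
  | 0 => []
  | n + 1 => chainPos α n ++ (α n).cpos

/-- One `→_P`-step with contextual rule `c` (read as `lhs → ctx[rhs]`) under
substitution `σ` at position `p` : from `s` to `t`. -/
def cStep (c : CRule F ar) (σ : ℕ → ETm F ar) (p : List ℕ) (s t : ETm F ar) : Prop :=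
  subtermAt s p = some (subst σ c.lhs) ∧
  replaceAt s p (fill (subst σ c.ctx) c.cpos (subst σ c.rhs)) = some t

/-- A finite `→*_R`-segment of a chain from `u` to `v` : all steps at positions
not above-or-equal `p` and each step allowed (w.r.t. `Π`) in the erased term. -/
def RSeg (R : Set (Rule F ar)) (Pi : Set (Pattern F ar)) (p : List ℕ)
    (u v : ETm F ar) : Prop :=
  ∃ (m : ℕ) (g : ℕ → ETm F ar) (q : ℕ → List ℕ), g 0 = u ∧ g m = v ∧
    ∀ k < m, RewriteAt (embedTRS R) (q k) (g k) (g (k + 1)) ∧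
      ¬ q k <+: p ∧ ¬ Forbidden Pi (eraseT (g k)) (q k)

/-- Witness data for an infinite FP-CDP chain `α` of the problem `(P, R, Π, T)` :
a family of substitutions `σ` (the pairs are renamed apart) and the terms `A i`
(before the `i`-th `→_P`-step) and `B i` (after it). -/
def ChainWitness (P : Set (CRule F ar)) (R : Set (Rule F ar)) (Pi : Set (Pattern F ar))
    (α : ℕ → CRule F ar) (σ : ℕ → ℕ → ETm F ar) (A B : ℕ → ETm F ar) : Prop :=
  (∀ i, α i ∈ P) ∧
  (∀ i, cStep (α i) (σ i) (chainPos α i) (A i) (B i)) ∧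
  (∀ i, ¬ Forbidden Pi (eraseT (A i)) (chainPos α i)) ∧
  (∀ i, RSeg R Pi (chainPos α (i + 1)) (B i) (A (i + 1))) ∧
  (∀ i, (∃ ts, (α i).rhs = Tm.app ESym.token ts) → B i = A (i + 1))

/-- `α` is an infinite FP-CDP chain of `(P, R, Π, T)`. -/
def IsChain (P : Set (CRule F ar)) (R : Set (Rule F ar)) (Pi : Set (Pattern F ar))
    (α : ℕ → CRule F ar) : Prop :=
  ∃ σ A B, ChainWitness P R Pi α σ A B

/-- The subterm of the extended term `w` at `p` is `Π`-terminating in its context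
(w.r.t. `R`) : no infinite restricted reduction (allowedness checked on erased terms). -/
def TermAtPosE (R : Set (Rule F ar)) (Pi : Set (Pattern F ar)) (w : ETm F ar)
    (p : List ℕ) : Prop :=
  ¬ ∃ (f : ℕ → ETm F ar) (q : ℕ → List ℕ),
      f 0 = w ∧
      (∀ n, RewriteAt (embedTRS R) (q n) (f n) (f (n + 1)) ∧
        ¬ Forbidden Pi (eraseT (f n)) (q n)) ∧
      (∀ n, ¬ StrictPrefix (q n) p) ∧ (∀ m, ∃ n, m ≤ n ∧ p <+: q n)

/-- Minimality of a chain: every subterm of `c_i'[t_iσ]_{p_i'}` strictly below `p_i'`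
is `Π`-terminating in its context (w.r.t. `R`). -/
def MinCond (R : Set (Rule F ar)) (Pi : Set (Pattern F ar)) (α : ℕ → CRule F ar)
    (B : ℕ → ETm F ar) : Prop :=
  ∀ i q, StrictPrefix (chainPos α (i + 1)) q → IsPos (B i) q → TermAtPosE R Pi (B i) q

/-- `α` is an infinite minimal FP-CDP chain of `(P, R, Π, T)`. -/
def IsMinChain (P : Set (CRule F ar)) (R : Set (Rule F ar)) (Pi : Set (Pattern F ar))
    (α : ℕ → CRule F ar) : Prop :=
  ∃ σ A B, ChainWitness P R Pi α σ A B ∧ MinCond R Pi α B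

/-- Witness data for a finite FP-CDP chain `α 0, …, α (n-1)`. -/
def FinChainWitness (P : Set (CRule F ar)) (R : Set (Rule F ar)) (Pi : Set (Pattern F ar))
    (n : ℕ) (α : ℕ → CRule F ar) (σ : ℕ → ℕ → ETm F ar) (A B : ℕ → ETm F ar) : Prop :=
  (∀ i < n, α i ∈ P) ∧
  (∀ i < n, cStep (α i) (σ i) (chainPos α i) (A i) (B i)) ∧
  (∀ i < n, ¬ Forbidden Pi (eraseT (A i)) (chainPos α i)) ∧
  (∀ i, i + 1 < n → RSeg R Pi (chainPos α (i + 1)) (B i) (A (i + 1))) ∧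
  (∀ i, i + 1 < n → (∃ ts, (α i).rhs = Tm.app ESym.token ts) → B i = A (i + 1))

/-- `α 0, …, α (n-1)` is a finite FP-CDP chain of `(P, R, Π, T)`. -/
def IsFinChain (P : Set (CRule F ar)) (R : Set (Rule F ar)) (Pi : Set (Pattern F ar))
    (n : ℕ) (α : ℕ → CRule F ar) : Prop :=
  ∃ σ A B, FinChainWitness P R Pi n α σ A B

/-- The FP-CDP problem `(P, R, Π, T)` is finite: no infinite minimal FP-CDP chain. -/
def FiniteProb (P : Set (CRule F ar)) (R : Set (Rule F ar)) (Pi : Set (Pattern F ar)) :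
    Prop :=
  ¬ ∃ α : ℕ → CRule F ar, IsMinChain P R Pi α

/-- Nesting a list of contexts around an inner term:
`nest [(c₁,p₁),…,(c_n,p_n)] t = c₁[c₂[… c_n[t]_{p_n} …]_{p₂}]_{p₁}`. -/
def nest : List (Tm F ar × List ℕ) → Tm F ar → Tm F ar
  | [], t => t
  | (c, p) :: rest, t => fill c p (nest rest t)

/-- `p_1.p_2.⋯.p_n` for the first `n` contexts of a sequence of CDPs. -/
def seqPos (β : ℕ → CRule F ar) (n : ℕ) : List ℕ :=
  (List.range n).foldr (fun i acc => (β i).cpos ++ acc) []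

/-- The nested-context term `c_1[c_2[… c_n[erase(t_n)]_{p_n} …]_{p_2}]_{p_1}` of the
first `n` CDPs of a sequence. -/
def seqNest (β : ℕ → CRule F ar) (n : ℕ) : Tm F ar :=
  nest ((List.range n).map fun i => (eraseT (β i).ctx, (β i).cpos))
    (eraseT (β (n - 1)).rhs)

/-- Reading a contextual rule `l → r [c]` as the plain rule `l → c[r]`. -/
def plainCRule (c : CRule F ar) : Rule (ESym F) (ear ar) :=
  ⟨c.lhs, fill c.ctx c.cpos c.rhs⟩

/-! ### Auxiliary lemmas -/

/-- Size of a term. -/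
def size : Tm F ar → ℕ
  | .var _ => 1
  | .app _ ts => 1 + ∑ i, size (ts i)

theorem size_pos (t : Tm F ar) : 0 < size t := by
  cases t <;> simp [size]

theorem subtermAt_append (p : List ℕ) : ∀ (t : Tm F ar) (p' : List ℕ),
    subtermAt t (p ++ p') = (subtermAt t p).bind fun u => subtermAt u p' := by
  induction p with
  | nil => intro t p'; simp [subtermAt]
  | cons i p ih =>
    intro t p'
    cases t with
    | var x => simp [subtermAt]
    | app f ts =>
      simp only [List.cons_append, subtermAt]
      by_cases h : i < ar f
      · simp [h, ih]
      · simp [h]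

theorem size_le_of_subtermAt : ∀ (p : List ℕ) (t u : Tm F ar),
    subtermAt t p = some u → size u ≤ size t := by
  intro p
  induction p with
  | nil => intro t u h; simp [subtermAt] at h; simp [h]
  | cons i p ih =>
    intro t u h
    cases t with
    | var x => simp [subtermAt] at h
    | app f ts =>
      simp only [subtermAt] at h
      by_cases hi : i < ar f
      · rw [dif_pos hi] at h
        calc size u ≤ size (ts ⟨i, hi⟩) := ih _ _ h
          _ ≤ ∑ j, size (ts j) :=
            Finset.single_le_sum (f := fun j => size (ts j)) (fun j _ => Nat.zero_le _) (Finset.mem_univ _)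
          _ ≤ size (Tm.app f ts) := by simp [size]
      · rw [dif_neg hi] at h; exact absurd h (by simp)

theorem size_lt_of_subtermAt {p : List ℕ} {t u : Tm F ar}
    (h : subtermAt t p = some u) (hp : p ≠ []) : size u < size t := by
  cases p with
  | nil => exact absurd rfl hp
  | cons i p =>
    cases t with
    | var x => simp [subtermAt] at h
    | app f ts =>
      simp only [subtermAt] at h
      by_cases hi : i < ar f
      · rw [dif_pos hi] at h
        calc size u ≤ size (ts ⟨i, hi⟩) := size_le_of_subtermAt _ _ _ h
          _ ≤ ∑ j, size (ts j) :=
            Finset.single_le_sum (f := fun j => size (ts j)) (fun j _ => Nat.zero_le _) (Finset.mem_univ _)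
          _ < size (Tm.app f ts) := by simp [size]
      · rw [dif_neg hi] at h; exact absurd h (by simp)

theorem replaceAt_of_subtermAt : ∀ (p : List ℕ) (t u : Tm F ar),
    subtermAt t p = some u → ∀ s, ∃ t', replaceAt t p s = some t' := by
  intro p
  induction p with
  | nil => intro t u _ s; exact ⟨s, by simp [replaceAt]⟩
  | cons i p ih =>
    intro t u h s
    cases t with
    | var x => simp [subtermAt] at h
    | app f ts =>
      simp only [subtermAt] at h
      by_cases hi : i < ar f
      · rw [dif_pos hi] at h
        obtain ⟨t', ht'⟩ := ih _ _ h s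
        exact ⟨Tm.app f (Function.update ts ⟨i, hi⟩ t'), by
          simp [replaceAt, dif_pos hi, ht']⟩
      · rw [dif_neg hi] at h; exact absurd h (by simp)

theorem replaceAt_self : ∀ (p : List ℕ) (t u : Tm F ar),
    subtermAt t p = some u → replaceAt t p u = some t := by
  intro p
  induction p with
  | nil => intro t u h; simp [subtermAt] at h; simp [replaceAt, h]
  | cons i p ih =>
    intro t u h
    cases t with
    | var x => simp [subtermAt] at h
    | app f ts =>
      simp only [subtermAt] at h
      by_cases hi : i < ar f
      · rw [dif_pos hi] at h
        simp [replaceAt, dif_pos hi, ih _ _ h, Function.update_eq_self]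
      · rw [dif_neg hi] at h; exact absurd h (by simp)

theorem fill_self {p : List ℕ} {t u : Tm F ar}
    (h : subtermAt t p = some u) : fill t p u = t := by
  simp [fill, replaceAt_self p t u h]

theorem subtermAt_replaceAt_prefix : ∀ (p : List ℕ) (t t' s : Tm F ar) (z : List ℕ),
    replaceAt t (p ++ z) s = some t' →
    ∃ u u', subtermAt t p = some u ∧ replaceAt u z s = some u' ∧
      subtermAt t' p = some u' := by
  intro p
  induction p with
  | nil => intro t t' s z h; exact ⟨t, t', by simp [subtermAt], h, by simp [subtermAt]⟩
  | cons i p ih =>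
    intro t t' s z h
    cases t with
    | var x => simp [replaceAt] at h
    | app f ts =>
      simp only [List.cons_append, replaceAt] at h
      by_cases hi : i < ar f
      · rw [dif_pos hi] at h
        simp only [Option.map_eq_some_iff] at h
        obtain ⟨w, hw, hw2⟩ := h
        obtain ⟨u, u', h1, h2, h3⟩ := ih _ _ _ _ hw
        refine ⟨u, u', by simp [subtermAt, dif_pos hi, h1], h2, ?_⟩
        subst hw2
        simp [subtermAt, dif_pos hi, h3]
      · rw [dif_neg hi] at h; exact absurd h (by simp)

theorem subtermAt_replaceAt {p : List ℕ} {t t' s : Tm F ar}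
    (h : replaceAt t p s = some t') : subtermAt t' p = some s := by
  have h' : replaceAt t (p ++ []) s = some t' := by simpa using h
  obtain ⟨u, u', _, h2, h3⟩ := subtermAt_replaceAt_prefix p t t' s [] h'
  simp only [replaceAt] at h2
  rw [← Option.some_inj.mp h2] at h3
  exact h3

theorem subtermAt_replaceAt_par : ∀ (o : List ℕ) (p : List ℕ) (t t' s : Tm F ar),
    replaceAt t o s = some t' → ¬ o <+: p → ¬ p <+: o →
    subtermAt t' p = subtermAt t p := by
  intro o
  induction o with
  | nil => intro p t t' s _ ho _; exact absurd (List.nil_prefix) ho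
  | cons i o ih =>
    intro p t t' s h ho hp
    cases t with
    | var x => simp [replaceAt] at h
    | app f ts =>
      simp only [replaceAt] at h
      by_cases hi : i < ar f
      · rw [dif_pos hi] at h
        simp only [Option.map_eq_some_iff] at h
        obtain ⟨w, hw, hw2⟩ := h
        subst hw2
        cases p with
        | nil => exact absurd (List.nil_prefix) hp
        | cons j p' =>
          by_cases hij : j = i
          · subst hij
            have ho' : ¬ o <+: p' := fun hh => ho (by simpa using hh)
            have hp' : ¬ p' <+: o := fun hh => hp (by simpa using hh)
            simp only [subtermAt, dif_pos hi]
            rw [Function.update_self]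
            exact ih _ _ _ _ hw ho' hp'
          · simp only [subtermAt]
            by_cases hj : j < ar f
            · rw [dif_pos hj, dif_pos hj,
                Function.update_of_ne (by simp [Fin.ext_iff, hij])]
            · rw [dif_neg hj, dif_neg hj]
      · rw [dif_neg hi] at h; exact absurd h (by simp)

theorem prefix_concat_cases {o p : List ℕ} {i : ℕ} (h : o <+: p ++ [i]) :
    o <+: p ∨ o = p ++ [i] := by
  rcases List.prefix_concat_iff.mp h with h1 | h1
  · exact Or.inr h1
  · exact Or.inl h1

/-- Extraction of a minimal non-terminating subterm. -/
theorem exists_min_subterm (R : Set (Rule F ar)) (Pi : Set (Pattern F ar))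
    (W t : Tm F ar) (q : List ℕ) (hWq : subtermAt W q = some t) :
    ∀ (N : ℕ) (u : Tm F ar) (p : List ℕ), size u ≤ N → subtermAt t p = some u →
      ¬ TermAtPos R Pi W (q ++ p) →
      ∃ p' u', subtermAt t p' = some u' ∧ MinNonTerm R Pi W (q ++ p') u' := by
  intro N
  induction N with
  | zero =>
    intro u p hsz _ _
    exact absurd (lt_of_lt_of_le (size_pos u) hsz) (by simp)
  | succ N ih =>
    intro u p hsz hup hnt
    by_cases hcase : ∃ p₂ u₂, p₂ ≠ [] ∧ subtermAt u p₂ = some u₂ ∧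
        ¬ TermAtPos R Pi W (q ++ (p ++ p₂))
    · obtain ⟨p₂, u₂, hp₂, hu₂, hnt₂⟩ := hcase
      have hsz₂ : size u₂ ≤ N := by
        have := size_lt_of_subtermAt hu₂ hp₂
        omega
      have hup₂ : subtermAt t (p ++ p₂) = some u₂ := by
        rw [subtermAt_append, hup]; exact hu₂
      exact ih u₂ (p ++ p₂) hsz₂ hup₂ hnt₂
    · push_neg at hcase
      have hWp : subtermAt W (q ++ p) = some u := by
        rw [subtermAt_append, hWq]; exact hup
      refine ⟨p, u, hup, ?_, ?_⟩
      · rw [TermInCtx, fill_self hWp]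
        exact hnt
      · intro p₂ u₂ hp₂ hu₂
        rw [fill_self hWp, List.append_assoc]
        exact hcase p₂ u₂ hp₂ hu₂

/-- Lemma 1: if `s` is minimally non-`Π`-terminating in a context
`C[□]_q` (flags of `Π` all `h` or `b`), then `C[s]_q` reduces, by `→_{R,Π}`-steps at
positions not above-or-equal `q`, to some `C'[lσ]_q` with `l → r ∈ R`, then
`C'[lσ]_q →_{R,Π} C'[rσ]_q` at position `q`, and `t = rσ` has a subterm `t|_p`
minimally non-`Π`-terminating in the context `C'[t[□]_p]_q`. -/
theorem min_nonterm_chain_step {F : Type} {ar : F → ℕ}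
    (R : Set (Rule F ar)) (Pi : Set (Pattern F ar))
    (hR : IsTRS R)
    (hwf : ∀ π ∈ Pi, IsPos π.pat π.pos)
    (hflag : ∀ π ∈ Pi, π.flag = Flag.h ∨ π.flag = Flag.b)
    (C s : Tm F ar) (q : List ℕ)
    (hq : IsPos C q)
    (hmin : MinNonTerm R Pi C q s) :
    ∃ (C' : Tm F ar) (r : Rule F ar) (σ : ℕ → Tm F ar),
      r ∈ R ∧ IsPos C' q ∧
      Relation.ReflTransGen (fun u v => ∃ p', ¬ p' <+: q ∧ FPStepAt R Pi p' u v)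
        (fill C q s) (fill C' q (subst σ r.lhs)) ∧
      FPStepAt R Pi q (fill C' q (subst σ r.lhs)) (fill C' q (subst σ r.rhs)) ∧
      ∃ p u, subtermAt (subst σ r.rhs) p = some u ∧
        MinNonTerm R Pi (fill C' q (subst σ r.rhs)) (q ++ p) u := by
  classical
  obtain ⟨hnt, hsub⟩ := hmin
  simp only [TermInCtx, TermAtPos, not_not] at hnt
  obtain ⟨f, qs, hf0, hstep, hnsp, hinf⟩ := hnt
  obtain ⟨u0, hu0⟩ : ∃ u, subtermAt C q = some u := Option.isSome_iff_exists.mp hq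
  obtain ⟨w0, hw0⟩ := replaceAt_of_subtermAt q C u0 hu0 s
  have hfill0 : fill C q s = w0 := by simp [fill, hw0]
  have hW0 : subtermAt (fill C q s) q = some s := by
    rw [hfill0]; exact subtermAt_replaceAt hw0
  -- there is a step at position q
  have hq_step : ∃ n, qs n = q := by
    by_contra hnq
    push_neg at hnq
    have hnpre : ∀ n, ¬ qs n <+: q := fun n hpre => hnsp n ⟨hpre, hnq n⟩
    cases s with
    | var x =>
      have hinv : ∀ n, subtermAt (f n) q = some (Tm.var x) := by
        intro n
        induction n with
        | zero => rw [hf0]; exact hW0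
        | succ n ihn =>
          obtain ⟨⟨r, hrR, σ, hsl, hrl⟩, hnf⟩ := hstep n
          by_cases hb : q <+: qs n
          · obtain ⟨z, hz⟩ := hb
            cases z with
            | nil => exact absurd (by simpa using hz.symm) (hnq n)
            | cons i rest =>
              rw [← hz, subtermAt_append, ihn] at hsl
              simp [subtermAt] at hsl
          · rw [subtermAt_replaceAt_par (qs n) q (f n) (f (n + 1)) _ hrl
              (hnpre n) hb]
            exact ihn
      obtain ⟨n1, -, hp1⟩ := hinf 0
      obtain ⟨z, hz⟩ := hp1
      cases z with
      | nil => exact absurd (by simpa using hz.symm) (hnq n1)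
      | cons i rest =>
        obtain ⟨⟨r, hrR, σ, hsl, hrl⟩, hnf⟩ := hstep n1
        rw [← hz, subtermAt_append, hinv n1] at hsl
        simp [subtermAt] at hsl
    | app f0 ts =>
      have hinv : ∀ n, ∃ ts', subtermAt (f n) q = some (Tm.app f0 ts') := by
        intro n
        induction n with
        | zero => exact ⟨ts, by rw [hf0]; exact hW0⟩
        | succ n ihn =>
          obtain ⟨ts', hts'⟩ := ihn
          obtain ⟨⟨r, hrR, σ, hsl, hrl⟩, hnf⟩ := hstep n
          by_cases hb : q <+: qs n
          · obtain ⟨z, hz⟩ := hb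
            cases z with
            | nil => exact absurd (by simpa using hz.symm) (hnq n)
            | cons i rest =>
              rw [← hz] at hrl
              obtain ⟨u, u', h1, h2, h3⟩ :=
                subtermAt_replaceAt_prefix q (f n) (f (n + 1)) _ _ hrl
              rw [hts'] at h1
              rw [← Option.some_inj.mp h1] at h2
              simp only [replaceAt] at h2
              by_cases hi : i < ar f0
              · rw [dif_pos hi] at h2
                simp only [Option.map_eq_some_iff] at h2
                obtain ⟨w, hw, hw2⟩ := h2
                exact ⟨Function.update ts' ⟨i, hi⟩ w, by rw [h3, ← hw2]⟩
              · rw [dif_neg hi] at h2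
                exact absurd h2 (by simp)
          · rw [subtermAt_replaceAt_par (qs n) q (f n) (f (n + 1)) _ hrl
              (hnpre n) hb]
            exact ⟨ts', hts'⟩
      by_cases hex : ∃ i : Fin (ar f0), ∀ m, ∃ n, m ≤ n ∧ (q ++ [i.val]) <+: qs n
      · obtain ⟨i, hi⟩ := hex
        have hterm := hsub [i.val] (ts i) (by simp)
          (by simp [subtermAt, i.isLt])
        refine hterm ⟨f, qs, hf0, hstep, ?_, hi⟩
        intro n hsp
        obtain ⟨hpre, hne⟩ := hsp
        rcases prefix_concat_cases hpre with h1 | h1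
        · exact hnpre n h1
        · exact hne h1
      · push_neg at hex
        choose m hm using hex
        obtain ⟨n, hMn, hpre⟩ := hinf (Finset.univ.sup m)
        obtain ⟨z, hz⟩ := hpre
        cases z with
        | nil => exact absurd (by simpa using hz.symm) (hnq n)
        | cons i rest =>
          obtain ⟨⟨r, hrR, σ, hsl, hrl⟩, hnf⟩ := hstep n
          obtain ⟨ts', hts'⟩ := hinv n
          rw [← hz, subtermAt_append, hts'] at hsl
          have hsl' : subtermAt (Tm.app f0 ts') (i :: rest)
              = some (subst σ r.lhs) := by simpa using hsl
          by_cases hi : i < ar f0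
          · refine hm ⟨i, hi⟩ n
              (le_trans (Finset.le_sup (Finset.mem_univ _)) hMn) ?_
            rw [← hz]
            exact ⟨rest, by simp⟩
          · simp [subtermAt, dif_neg hi] at hsl'
  -- the first step at q
  let n := Nat.find hq_step
  have hqn : qs n = q := Nat.find_spec hq_step
  have hlt : ∀ k < n, qs k ≠ q := fun k hk => Nat.find_min hq_step hk
  have hchain : ∀ m, m ≤ n →
      Relation.ReflTransGen (fun u v => ∃ p', ¬ p' <+: q ∧ FPStepAt R Pi p' u v)
        (f 0) (f m) := by
    intro m
    induction m with
    | zero => intro _; exact Relation.ReflTransGen.refl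
    | succ m ih =>
      intro hm
      exact (ih (by omega)).tail
        ⟨qs m, fun hpre => hnsp m ⟨hpre, hlt m (by omega)⟩, hstep m⟩
  have hs' : FPStepAt R Pi q (f n) (f (n + 1)) := hqn ▸ hstep n
  obtain ⟨⟨r, hrR, σ, hsl, hrl⟩, hnf⟩ := hs'
  have hfl : fill (f n) q (subst σ r.lhs) = f n := by
    simp [fill, replaceAt_self q (f n) _ hsl]
  have hfr : fill (f n) q (subst σ r.rhs) = f (n + 1) := by
    simp [fill, hrl]
  refine ⟨f n, r, σ, hrR, ?_, ?_, ?_, ?_⟩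
  · show (subtermAt (f n) q).isSome
    rw [hsl]; rfl
  · rw [hfl, ← hf0]
    exact hchain n le_rfl
  · rw [hfl, hfr]
    exact ⟨⟨r, hrR, σ, hsl, hrl⟩, hnf⟩
  · -- extract minimal non-terminating subterm of rσ in f (n+1)
    have hWq : subtermAt (f (n + 1)) q = some (subst σ r.rhs) :=
      subtermAt_replaceAt hrl
    have hntW : ¬ TermAtPos R Pi (f (n + 1)) q := by
      intro hT
      refine hT ⟨fun k => f (n + 1 + k), fun k => qs (n + 1 + k), rfl,
        fun k => hstep (n + 1 + k), fun k => hnsp (n + 1 + k), fun m => ?_⟩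
      obtain ⟨N, hN, hp⟩ := hinf (n + 1 + m)
      refine ⟨N - (n + 1), by omega, ?_⟩
      have hNe : n + 1 + (N - (n + 1)) = N := by omega
      show q <+: qs (n + 1 + (N - (n + 1)))
      rw [hNe]
      exact hp
    obtain ⟨p', u', hsu, hminu⟩ :=
      exists_min_subterm R Pi (f (n + 1)) (subst σ r.rhs) q hWq
        (size (subst σ r.rhs)) (subst σ r.rhs) [] le_rfl (by simp [subtermAt])
        (by simpa using hntW)
    refine ⟨p', u', hsu, ?_⟩
    rw [hfr]
    exact hminu

end FP
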